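/- Every residuated difference of max-plus affine functions is max-plus convex and lower semi-continuous: for all w', w'' ∈ ℝmax^n and d', d'' ∈ ℝmax, the function u : ℝmax^n → ℝmax defined by u(x) = max(⟨w', x⟩, d') ⊖ max(⟨w'', x⟩, d'') has max-plus convex epigraph, and every lower level set {x ∈ ℝmax^n : u(x) ≤ t}, t ∈ ℝ̄, is closed in the product topology of ℝmax^n. -/

import Mathlib

noncomputable section

/-- `ℝmax = ℝ ∪ {-∞}`, the max-plus semifield. -/
abbrev Rmax := WithBot ℝ

/-- the order topology on `ℝmax`. -/
noncomputable instance : TopologicalSpace Rmax := Preorder.topology Rmax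
instance : OrderTopology Rmax := ⟨rfl⟩

/-- the embedding of `ℝmax = ℝ ∪ {-∞}` into `ℝ̄ = [-∞,+∞]`. -/
def Rmax.toE : Rmax → EReal := WithBot.recBotCoe ⊥ (fun r : ℝ => (r : EReal))

/-- max-plus scalar product `⟨w,x⟩ = max_i (w_i + x_i)` on `ℝmax^n`. -/
def mdot {n : ℕ} (w x : Fin n → Rmax) : Rmax := Finset.univ.sup fun i => w i + x i

/-- residuated difference: `a ⊖ b = a` if `a > b`, and `-∞` otherwise. -/
def rdiff (a b : Rmax) : Rmax := if b < a then a else ⊥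

/-- max-plus convexity of a subset of `ℝmax^n`. -/
def MPConvex {n : ℕ} (C : Set (Fin n → Rmax)) : Prop :=
  ∀ x ∈ C, ∀ y ∈ C, ∀ α β : Rmax, max α β = 0 →
    (fun i => max (α + x i) (β + y i)) ∈ C

/-- max-plus convexity of a subset of `ℝmax^n × ℝmax ≅ ℝmax^{n+1}`. -/
def MPConvexP {n : ℕ} (C : Set ((Fin n → Rmax) × Rmax)) : Prop :=
  ∀ p ∈ C, ∀ q ∈ C, ∀ α β : Rmax, max α β = 0 →
    ((fun i => max (α + p.1 i) (β + q.1 i)), max (α + p.2) (β + q.2)) ∈ C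

/-!
The residuation rule `a ⊖ b ≤ s ↔ a ≤ b ⊕ s` drives both halves. Since the affine maps
`f' = ⟨w', ·⟩ ⊕ d'` and `f'' = ⟨w'', ·⟩ ⊕ d''` commute with max-plus combinations
`α x ⊕ β y` (`α ⊕ β = 0`), convexity reduces to `(α a₁ ⊕ β a₂) ⊖ (α b₁ ⊕ β b₂) ≤
α (a₁ ⊖ b₁) ⊕ β (a₂ ⊖ b₂)`, which follows from `a ≤ b ⊕ (a ⊖ b)`. The level set
`{u ≤ s}` is `{f' ≤ f'' ⊕ s}`, closed because `f'` and `f''` are continuous.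
-/

namespace Rmax

lemma continuous_const_add (c : Rmax) : Continuous (c + ·) := by
  induction c using WithBot.recBotCoe with
  | bot => simpa only [WithBot.bot_add] using continuous_const
  | coe r =>
    refine Monotone.continuous_of_surjective (fun a b h => add_le_add_right h _) fun b => ?_
    induction b using WithBot.recBotCoe with
    | bot => exact ⟨⊥, WithBot.add_bot _⟩
    | coe s => exact ⟨((s - r : ℝ) : Rmax), by norm_num [← WithBot.coe_add]⟩

lemma add_finsetSup {ι : Type*} (c : Rmax) (s : Finset ι) (f : ι → Rmax) :
    c + s.sup f = s.sup (c + f ·) := by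
  induction s using Finset.cons_induction with
  | empty => exact WithBot.add_bot c
  | cons a s _ ih => simp only [Finset.sup_cons, add_max, ih]

lemma toE_le_toE {a b : Rmax} : toE a ≤ toE b ↔ a ≤ b := by
  induction a using WithBot.recBotCoe <;> induction b using WithBot.recBotCoe <;>
    simp [toE]

lemma exists_toE_eq_of_ne_top {t : EReal} (ht : t ≠ ⊤) : ∃ s : Rmax, toE s = t := by
  induction t using EReal.rec with
  | bot => exact ⟨⊥, rfl⟩
  | coe r => exact ⟨r, rfl⟩
  | top => exact absurd rfl ht

end Rmax

lemma continuous_mdot {n : ℕ} (w : Fin n → Rmax) : Continuous (mdot w) := by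
  unfold mdot
  induction (Finset.univ : Finset (Fin n)) using Finset.cons_induction with
  | empty => exact continuous_const
  | cons a s _ ih =>
    simp only [Finset.sup_cons]
    exact ((Rmax.continuous_const_add (w a)).comp (continuous_apply a)).max ih

lemma mdot_max_add {n : ℕ} (w x y : Fin n → Rmax) (α β : Rmax) :
    mdot w (fun i => max (α + x i) (β + y i)) = max (α + mdot w x) (β + mdot w y) := by
  simp only [mdot, Rmax.add_finsetSup, ← Finset.sup_sup, add_max, add_left_comm (w _)]
  rfl

lemma max_mdot_max_add {n : ℕ} (w x y : Fin n → Rmax) (d α β : Rmax) (h : max α β = 0) :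
    max (mdot w fun i => max (α + x i) (β + y i)) d =
      max (α + max (mdot w x) d) (β + max (mdot w y) d) := by
  conv_lhs => rw [mdot_max_add, ← zero_add d, ← h, ← max_add_add_right]
  rw [max_max_max_comm, add_max, add_max]

lemma rdiff_le_iff {a b s : Rmax} : rdiff a b ≤ s ↔ a ≤ max b s := by
  unfold rdiff
  split_ifs with h
  · exact ⟨fun h' => h'.trans (le_max_right _ _),
      fun h' => (le_max_iff.1 h').resolve_left h.not_ge⟩
  · exact ⟨fun _ => (not_lt.1 h).trans (le_max_left _ _), fun _ => bot_le⟩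

lemma le_max_rdiff (a b : Rmax) : a ≤ max b (rdiff a b) := rdiff_le_iff.1 le_rfl

lemma rdiff_max_add_le (a₁ b₁ a₂ b₂ α β : Rmax) :
    rdiff (max (α + a₁) (β + a₂)) (max (α + b₁) (β + b₂)) ≤
      max (α + rdiff a₁ b₁) (β + rdiff a₂ b₂) := by
  rw [rdiff_le_iff, max_max_max_comm]
  refine max_le_max ?_ ?_
  · exact (add_le_add_right (le_max_rdiff a₁ b₁) α).trans_eq (add_max _ _ _)
  · exact (add_le_add_right (le_max_rdiff a₂ b₂) β).trans_eq (add_max _ _ _)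

lemma isClosed_setOf_rdiff_le {X : Type*} [TopologicalSpace X] {f g : X → Rmax}
    (hf : Continuous f) (hg : Continuous g) (s : Rmax) :
    IsClosed {x | rdiff (f x) (g x) ≤ s} := by
  simp only [rdiff_le_iff]
  exact isClosed_le hf (hg.max continuous_const)

/-- **Every residuated difference of max-plus affine functions is max-plus
convex (its epigraph is max-plus convex) and lower semi-continuous (its lower
level sets are closed).** -/
theorem stmt19 {n : ℕ} (w' w'' : Fin n → Rmax) (d' d'' : Rmax)
    (u : (Fin n → Rmax) → Rmax)
    (hu : ∀ x, u x = rdiff (max (mdot w' x) d') (max (mdot w'' x) d'')) :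
    MPConvexP {p : (Fin n → Rmax) × Rmax | u p.1 ≤ p.2} ∧
    ∀ t : EReal, IsClosed {x : Fin n → Rmax | Rmax.toE (u x) ≤ t} := by
  obtain rfl : u = _ := funext hu
  refine ⟨fun p hp q hq α β h => ?_, fun t => ?_⟩
  · simp only [Set.mem_ofPred_eq, max_mdot_max_add _ _ _ _ _ _ h] at hp hq ⊢
    exact (rdiff_max_add_le _ _ _ _ α β).trans
      (max_le_max (add_le_add_right hp α) (add_le_add_right hq β))
  · rcases eq_or_ne t ⊤ with rfl | ht
    · simp only [le_top, Set.ofPred_true, isClosed_univ]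
    obtain ⟨s, rfl⟩ := Rmax.exists_toE_eq_of_ne_top ht
    simp only [Rmax.toE_le_toE]
    exact isClosed_setOf_rdiff_le ((continuous_mdot w').max continuous_const)
      ((continuous_mdot w'').max continuous_const) s

end
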